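/- arXiv:2311.05229 — 2 statements merged into one kernel-verified Lean document; each statement's English description precedes it below -/
import Mathlib

section
/- Let ρ : ℝ^d → ℝ be continuous, nonnegative, bounded, integrable and even (ρ(−x) = ρ(x)), let α ∈ (0,1), and let f : ℝ^d × ℝ → ℝ be continuous with α(s−s′) ≤ f(x,s) − f(x,s′) ≤ α⁻¹(s−s′) for all x ∈ ℝ^d and all s ≥ s′, and with sup_x |f(x,0)| < ∞. Define K(x,m) := ∫_{ℝ^d} ρ(x−z) f(z,(m∗ρ)(z)) dz. Then for all Borel probability measures m₁, m₂ on ℝ^d, ∫(K(x,m₁) − K(x,m₂)) d(m₁−m₂)(x) = ∫_{ℝ^d} (f(z,(m₁∗ρ)(z)) − f(z,(m₂∗ρ)(z))) ((m₁∗ρ)(z) − (m₂∗ρ)(z)) dz. -/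
open MeasureTheory

/-- Convolution of a (probability) measure with a kernel:
`(m∗ρ)(z) = ∫ ρ(z-y) dm(y)`. -/
noncomputable def measConv {d : ℕ} (ρ : EuclideanSpace ℝ (Fin d) → ℝ)
    (m : Measure (EuclideanSpace ℝ (Fin d))) (z : EuclideanSpace ℝ (Fin d)) : ℝ :=
  ∫ y, ρ (z - y) ∂m

/-- The regularized coupling `K(x,m) = ∫ ρ(x-z) f(z,(m∗ρ)(z)) dz`. -/
noncomputable def llCoupling {d : ℕ} (ρ : EuclideanSpace ℝ (Fin d) → ℝ)
    (f : EuclideanSpace ℝ (Fin d) → ℝ → ℝ)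
    (m : Measure (EuclideanSpace ℝ (Fin d))) (x : EuclideanSpace ℝ (Fin d)) : ℝ :=
  ∫ z, ρ (x - z) * f z (measConv ρ m z)

/-! With `g z := f(z, (m₁∗ρ)(z)) − f(z, (m₂∗ρ)(z))`, the difference `K(·,m₁) − K(·,m₂)` is the
convolution `ρ ⋆ g`. The slope bounds on `f` and `0 ≤ m∗ρ ≤ sup ρ` make `g` bounded, so Fubini
applies, and since `ρ` is even it moves the convolution from `g` onto the measure:
`∫ (ρ ⋆ g) dm = ∫ g · (m∗ρ) dz`. Subtracting the cases `m = m₁` and `m = m₂` gives the identity. -/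

lemma abs_sub_le_of_slope_bounds {φ : ℝ → ℝ} {α : ℝ} (hα : 0 ≤ α)
    (hφ : ∀ s s', s' ≤ s → α * (s - s') ≤ φ s - φ s' ∧ φ s - φ s' ≤ α⁻¹ * (s - s'))
    (s s' : ℝ) : |φ s - φ s'| ≤ α⁻¹ * |s - s'| := by
  wlog hle : s' ≤ s generalizing s s'
  · rw [abs_sub_comm, abs_sub_comm s]
    exact this s' s (le_of_not_ge hle)
  obtain ⟨hlow, hup⟩ := hφ s s' hle
  have hαs : 0 ≤ α * (s - s') := mul_nonneg hα (sub_nonneg.2 hle)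
  rw [abs_of_nonneg (sub_nonneg.2 hle), abs_of_nonneg (hαs.trans hlow)]
  exact hup

section

variable {d : ℕ}

local notation "E" => EuclideanSpace ℝ (Fin d)

lemma measConv_nonneg {ρ : E → ℝ} (hρ : ∀ x, 0 ≤ ρ x) (m : Measure E) (z : E) :
    0 ≤ measConv ρ m z :=
  integral_nonneg fun _ => hρ _

lemma measConv_le {ρ : E → ℝ} {C : ℝ} (hρ : ∀ x, 0 ≤ ρ x) (hC : ∀ x, ρ x ≤ C)
    (m : Measure E) [IsProbabilityMeasure m] (z : E) : measConv ρ m z ≤ C :=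
  calc measConv ρ m z ≤ ∫ _, C ∂m :=
        integral_mono_of_nonneg (.of_forall fun _ => hρ _) (integrable_const C)
          (.of_forall fun _ => hC _)
    _ = C := by simp

lemma integrable_comp_fst_sub_snd {ρ : E → ℝ} (hρ : Integrable ρ)
    (m : Measure E) [IsFiniteMeasure m] :
    Integrable (fun p : E × E => ρ (p.1 - p.2)) (volume.prod m) := by
  simpa using (integrable_const (1 : ℝ)).convolution_integrand
    (ContinuousLinearMap.mul ℝ ℝ) (μ := volume) (ν := m) hρ

lemma integrable_measConv {ρ : E → ℝ} (hρ : Integrable ρ) (m : Measure E) [IsFiniteMeasure m] :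
    Integrable (measConv ρ m) :=
  (integrable_comp_fst_sub_snd hρ m).integral_prod_left

theorem integral_integral_mul_eq_integral_mul_measConv {ρ g : E → ℝ} (hρ : Integrable ρ)
    (hρeven : ∀ x, ρ (-x) = ρ x) (hg : AEStronglyMeasurable g) {B : ℝ} (hgB : ∀ z, ‖g z‖ ≤ B)
    (m : Measure E) [IsFiniteMeasure m] :
    ∫ x, (∫ z, ρ (x - z) * g z) ∂m = ∫ z, g z * measConv ρ m z := by
  have hint : Integrable (fun p : E × E => g p.1 * ρ (p.1 - p.2)) (volume.prod m) :=
    (integrable_comp_fst_sub_snd hρ m).bdd_mul hg.comp_fst (.of_forall fun p => hgB p.1)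
  have hsymm : ∀ x z : E, ρ (x - z) * g z = g z * ρ (z - x) := fun x z => by
    rw [← hρeven, neg_sub, mul_comm]
  simp_rw [hsymm, measConv, ← integral_const_mul]
  exact (integral_integral_swap hint).symm

lemma aestronglyMeasurable_apply_measConv {ρ : E → ℝ} {f : E → ℝ → ℝ}
    (hf : Measurable (Function.uncurry f)) (hρ : Integrable ρ) (m : Measure E) [IsFiniteMeasure m] :
    AEStronglyMeasurable (fun z => f z (measConv ρ m z)) :=
  (hf.comp_aemeasurable
    (aemeasurable_id.prodMk (integrable_measConv hρ m).aemeasurable)).aestronglyMeasurable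

lemma norm_apply_measConv_le {ρ : E → ℝ} {f : E → ℝ → ℝ} {α C C₀ : ℝ} (hα : 0 ≤ α)
    (hf : ∀ x s s', s' ≤ s → α * (s - s') ≤ f x s - f x s' ∧ f x s - f x s' ≤ α⁻¹ * (s - s'))
    (hf0 : ∀ x, |f x 0| ≤ C₀) (hρ : ∀ x, 0 ≤ ρ x) (hC : ∀ x, ρ x ≤ C)
    (m : Measure E) [IsProbabilityMeasure m] (z : E) :
    ‖f z (measConv ρ m z)‖ ≤ C₀ + α⁻¹ * C := by
  have hlip := abs_sub_le_of_slope_bounds hα (hf z) (measConv ρ m z) 0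
  rw [sub_zero, abs_of_nonneg (measConv_nonneg hρ m z)] at hlip
  have hconv := mul_le_mul_of_nonneg_left (measConv_le hρ hC m z) (inv_nonneg.2 hα)
  have htri := abs_sub_abs_le_abs_sub (f z (measConv ρ m z)) (f z 0)
  rw [Real.norm_eq_abs]
  linarith [hf0 z]

end

theorem llCoupling_symmetrization_general
    {d : ℕ} (ρ : EuclideanSpace ℝ (Fin d) → ℝ)
    (hρnn : ∀ x, 0 ≤ ρ x) (hρb : ∃ C, ∀ x, ρ x ≤ C)
    (hρint : Integrable ρ) (hρeven : ∀ x, ρ (-x) = ρ x)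
    (α : ℝ) (hα : α ∈ Set.Ioo (0 : ℝ) 1)
    (f : EuclideanSpace ℝ (Fin d) → ℝ → ℝ)
    (hfc : Continuous (Function.uncurry f))
    (hfmono : ∀ x s s', s' ≤ s →
      α * (s - s') ≤ f x s - f x s' ∧ f x s - f x s' ≤ α⁻¹ * (s - s'))
    (hf0 : ∃ C, ∀ x, |f x 0| ≤ C)
    (m₁ m₂ : Measure (EuclideanSpace ℝ (Fin d)))
    [IsProbabilityMeasure m₁] [IsProbabilityMeasure m₂] :
    (∫ x, (llCoupling ρ f m₁ x - llCoupling ρ f m₂ x) ∂m₁)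
      - (∫ x, (llCoupling ρ f m₁ x - llCoupling ρ f m₂ x) ∂m₂)
    = ∫ z, (f z (measConv ρ m₁ z) - f z (measConv ρ m₂ z))
        * (measConv ρ m₁ z - measConv ρ m₂ z) := by
  obtain ⟨C, hC⟩ := hρb
  obtain ⟨C₀, hC₀⟩ := hf0
  have hmeas (m : Measure _) [IsFiniteMeasure m] :
      AEStronglyMeasurable (fun z => f z (measConv ρ m z)) :=
    aestronglyMeasurable_apply_measConv hfc.measurable hρint m
  have hbound (m : Measure _) [IsProbabilityMeasure m] (z) :
      ‖f z (measConv ρ m z)‖ ≤ C₀ + α⁻¹ * C :=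
    norm_apply_measConv_le hα.1.le hfmono hC₀ hρnn hC m z
  set g := fun z => f z (measConv ρ m₁ z) - f z (measConv ρ m₂ z) with hg
  have hgB (z) : ‖g z‖ ≤ 2 * (C₀ + α⁻¹ * C) :=
    (norm_sub_le _ _).trans (by linarith [hbound m₁ z, hbound m₂ z])
  have hK (x) : llCoupling ρ f m₁ x - llCoupling ρ f m₂ x = ∫ z, ρ (x - z) * g z := by
    rw [llCoupling, llCoupling, ← integral_sub
      ((hρint.comp_sub_left x).mul_bdd (hmeas m₁) (.of_forall (hbound m₁)))
      ((hρint.comp_sub_left x).mul_bdd (hmeas m₂) (.of_forall (hbound m₂)))]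
    simp_rw [hg, mul_sub]
  have hswap (m : Measure _) [IsFiniteMeasure m] :
      ∫ x, (llCoupling ρ f m₁ x - llCoupling ρ f m₂ x) ∂m = ∫ z, g z * measConv ρ m z := by
    simp_rw [hK]
    exact integral_integral_mul_eq_integral_mul_measConv hρint hρeven
      ((hmeas m₁).sub (hmeas m₂)) hgB m
  have hint (m : Measure _) [IsFiniteMeasure m] :
      Integrable (fun z => g z * measConv ρ m z) :=
    (integrable_measConv hρint m).bdd_mul ((hmeas m₁).sub (hmeas m₂)) (.of_forall hgB)
  rw [hswap m₁, hswap m₂, ← integral_sub (hint m₁) (hint m₂)]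
  simp_rw [hg, mul_sub]

/-- Fubini-type symmetrization identity:
`∫ (K(·,m₁)-K(·,m₂)) d(m₁-m₂) = ∫ (f(z,m₁∗ρ(z)) - f(z,m₂∗ρ(z))) (m₁∗ρ(z) - m₂∗ρ(z)) dz`. -/
theorem llCoupling_symmetrization
    {d : ℕ} (ρ : EuclideanSpace ℝ (Fin d) → ℝ)
    (hρc : Continuous ρ) (hρnn : ∀ x, 0 ≤ ρ x) (hρb : ∃ C, ∀ x, ρ x ≤ C)
    (hρint : Integrable ρ) (hρeven : ∀ x, ρ (-x) = ρ x)
    (α : ℝ) (hα : α ∈ Set.Ioo (0 : ℝ) 1)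
    (f : EuclideanSpace ℝ (Fin d) → ℝ → ℝ)
    (hfc : Continuous (Function.uncurry f))
    (hfmono : ∀ x s s', s' ≤ s →
      α * (s - s') ≤ f x s - f x s' ∧ f x s - f x s' ≤ α⁻¹ * (s - s'))
    (hf0 : ∃ C, ∀ x, |f x 0| ≤ C)
    (m₁ m₂ : Measure (EuclideanSpace ℝ (Fin d)))
    [IsProbabilityMeasure m₁] [IsProbabilityMeasure m₂] :
    (∫ x, (llCoupling ρ f m₁ x - llCoupling ρ f m₂ x) ∂m₁)
      - (∫ x, (llCoupling ρ f m₁ x - llCoupling ρ f m₂ x) ∂m₂)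
    = ∫ z, (f z (measConv ρ m₁ z) - f z (measConv ρ m₂ z))
        * (measConv ρ m₁ z - measConv ρ m₂ z) :=
  llCoupling_symmetrization_general ρ hρnn hρb hρint hρeven α hα f hfc hfmono hf0 m₁ m₂
end

section
/- Let K ≥ 0, T > 0, and let h : [0,T] × ℝ^d → ℝ be measurable with |h(s,x)| ≤ K for all s ∈ [0,T] and x ∈ ℝ^d. Define ψ(x) := ∫_0^T ∫_{ℝ^d} Γ(x−y, s) h(s,y) dy ds. Then ψ is continuously differentiable and there exists a constant C > 0, depending only on d, such that ‖Dψ(x)‖ ≤ C K T^{1/2} for all x ∈ ℝ^d. -/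
/-!
Differentiating under both integrals, `Dψ(x) = ∫₀ᵀ ∫ h(s,y) DΓ(x - y, s) dy ds`. Parabolic
scaling `Γ(√s z, s) = s^{-d/2} Γ(z, 1)` shows that `DΓ(·, s)` has `L¹` norm `M s^{-1/2}` with
`M = ∫ ‖DΓ(z, 1)‖ dz`, hence `‖Dψ‖ ≤ K M ∫₀ᵀ s^{-1/2} ds = 2 M K T^{1/2}`.

For fixed `s > 0` the spatial differentiation is legitimate because `DΓ(·, s)` is dominated on
unit balls by an integrable Gaussian (`‖z‖² ≥ ‖z₀‖²/2 - 1` when `‖z - z₀‖ < 1`); in time,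
`K M s^{-1/2}` is an integrable majorant, which also yields the continuity of `Dψ`.
-/

open MeasureTheory

/-- The heat kernel `Γ(x,t) = (4πt)^{-d/2} exp(-‖x‖²/(4t))` on `ℝ^d`. -/
noncomputable def heatKernel (d : ℕ) (x : EuclideanSpace ℝ (Fin d)) (t : ℝ) : ℝ :=
  (4 * Real.pi * t) ^ (-(d : ℝ) / 2) * Real.exp (-‖x‖ ^ 2 / (4 * t))

open Real Set Filter Topology

section ConvolutionIntegral

variable {E F : Type*} [NormedAddCommGroup E] [NormedSpace ℝ E] [MeasurableSpace E] [BorelSpace E]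
  [FiniteDimensional ℝ E] {μ : Measure E} [μ.IsAddHaarMeasure]
  [NormedAddCommGroup F] [NormedSpace ℝ F] {g : E → ℝ} {K : ℝ}

theorem norm_integral_smul_comp_sub_le {f : E → F} (hf : Integrable f μ)
    (hgK : ∀ y, |g y| ≤ K) (x : E) :
    ‖∫ y, g y • f (x - y) ∂μ‖ ≤ K * ∫ z, ‖f z‖ ∂μ := by
  rw [← integral_sub_left_eq_self (fun z => ‖f z‖) μ x, ← integral_const_mul]
  refine norm_integral_le_of_norm_le ((hf.norm.comp_sub_left x).const_mul K) (ae_of_all _ ?_)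
  intro y
  rw [norm_smul, Real.norm_eq_abs]
  exact mul_le_mul_of_nonneg_right (hgK y) (norm_nonneg _)

theorem integrable_smul_comp_sub {f : E → F} (hf : Integrable f μ)
    (hg : AEStronglyMeasurable g μ) (hgK : ∀ y, |g y| ≤ K) (x : E) :
    Integrable (fun y => g y • f (x - y)) μ :=
  (hf.comp_sub_left x).bdd_smul K hg (ae_of_all _ hgK)

variable {G : E → ℝ}

theorem continuous_integral_smul_comp_sub [CompleteSpace F] {f : E → F} (hf : Continuous f)
    (hg : AEStronglyMeasurable g μ) (hgK : ∀ y, |g y| ≤ K) (hG : Integrable G μ)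
    (hfG : ∀ z₀ z, ‖z - z₀‖ < 1 → ‖f z‖ ≤ G z₀) :
    Continuous fun x => ∫ y, g y • f (x - y) ∂μ := by
  refine continuous_iff_continuousAt.2 fun x₀ => continuousAt_of_dominated
    (bound := fun y => K * G (x₀ - y)) (Eventually.of_forall fun x =>
      hg.smul (hf.comp (continuous_const.sub continuous_id)).aestronglyMeasurable) ?_
    ((hG.comp_sub_left x₀).const_mul K) (ae_of_all _ fun y => by fun_prop)
  filter_upwards [Metric.ball_mem_nhds x₀ one_pos] with x hx
  refine ae_of_all _ fun y => ?_
  rw [norm_smul, Real.norm_eq_abs]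
  refine mul_le_mul (hgK y) (hfG _ _ ?_) (norm_nonneg _) ((abs_nonneg _).trans (hgK y))
  simpa [dist_eq_norm] using hx

theorem hasFDerivAt_integral_comp_sub_mul {k : E → ℝ} {k' : E → E →L[ℝ] ℝ}
    (hk : ∀ z, HasFDerivAt k (k' z) z) (hk' : Continuous k') (hk_int : Integrable k μ)
    (hg : AEStronglyMeasurable g μ) (hgK : ∀ y, |g y| ≤ K)
    (hG : Integrable G μ) (hk'G : ∀ z₀ z, ‖z - z₀‖ < 1 → ‖k' z‖ ≤ G z₀) (x₀ : E) :
    HasFDerivAt (fun x => ∫ y, k (x - y) * g y ∂μ) (∫ y, g y • k' (x₀ - y) ∂μ) x₀ := by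
  have hk_cont : Continuous k := continuous_iff_continuousAt.2 fun z => (hk z).continuousAt
  refine hasFDerivAt_integral_of_dominated_of_fderiv_le
    (F' := fun x y => g y • k' (x - y)) (bound := fun y => K * G (x₀ - y))
    (Metric.ball_mem_nhds x₀ one_pos)
    (Eventually.of_forall fun x =>
      (hk_cont.comp (continuous_const.sub continuous_id)).aestronglyMeasurable.mul hg) ?_
    (hg.smul (hk'.comp (continuous_const.sub continuous_id)).aestronglyMeasurable) ?_
    ((hG.comp_sub_left x₀).const_mul K) (ae_of_all _ fun y x _ => ?_)
  · simpa only [smul_eq_mul, mul_comm] using integrable_smul_comp_sub hk_int hg hgK x₀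
  · refine ae_of_all _ fun y x hx => ?_
    rw [norm_smul, Real.norm_eq_abs]
    refine mul_le_mul (hgK y) (hk'G _ _ ?_) (norm_nonneg _) ((abs_nonneg _).trans (hgK y))
    simpa [dist_eq_norm] using hx
  · exact ((hasFDerivAt_comp_sub y).2 (hk (x - y))).mul_const (g y)

end ConvolutionIntegral

theorem contDiff_one_integral_and_norm_fderiv_le {E G α : Type*} [NormedAddCommGroup E]
    [NormedSpace ℝ E] [NormedAddCommGroup G] [NormedSpace ℝ G] [CompleteSpace G]
    [MeasurableSpace α] {ν : Measure α} {F : E → α → G} {F' : E → α → E →L[ℝ] G} {b : α → ℝ}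
    (hF_meas : ∀ x, AEStronglyMeasurable (F x) ν) (hF_int : ∀ x, Integrable (F x) ν)
    (hF'_meas : ∀ x, AEStronglyMeasurable (F' x) ν) (hb : Integrable b ν)
    (h_bound : ∀ᵐ a ∂ν, ∀ x, ‖F' x a‖ ≤ b a)
    (h_diff : ∀ᵐ a ∂ν, ∀ x, HasFDerivAt (F · a) (F' x a) x)
    (h_cont : ∀ᵐ a ∂ν, Continuous (F' · a)) :
    ContDiff ℝ 1 (fun x => ∫ a, F x a ∂ν) ∧
      ∀ x, ‖fderiv ℝ (fun x => ∫ a, F x a ∂ν) x‖ ≤ ∫ a, b a ∂ν := by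
  have hderiv : ∀ x₀, HasFDerivAt (fun x => ∫ a, F x a ∂ν) (∫ a, F' x₀ a ∂ν) x₀ := fun x₀ =>
    hasFDerivAt_integral_of_dominated_of_fderiv_le univ_mem (Eventually.of_forall hF_meas)
      (hF_int x₀) (hF'_meas x₀) (h_bound.mono fun _ h x _ => h x) hb
      (h_diff.mono fun _ h x _ => h x)
  have hfderiv : fderiv ℝ (fun x => ∫ a, F x a ∂ν) = fun x₀ => ∫ a, F' x₀ a ∂ν :=
    funext fun x₀ => (hderiv x₀).fderiv
  refine ⟨contDiff_one_iff_fderiv.2 ⟨fun x => (hderiv x).differentiableAt, ?_⟩, fun x => ?_⟩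
  · rw [hfderiv]
    exact continuous_of_dominated hF'_meas (fun x => h_bound.mono fun _ h => h x) hb h_cont
  · rw [hfderiv]
    exact norm_integral_le_of_norm_le hb (h_bound.mono fun _ h => h x)

section Gaussian

variable {V : Type*} [NormedAddCommGroup V] [InnerProductSpace ℝ V] [FiniteDimensional ℝ V]
  [MeasurableSpace V] [BorelSpace V]

theorem integrable_exp_neg_mul_sq_norm {b : ℝ} (hb : 0 < b) :
    Integrable (fun v : V => exp (-b * ‖v‖ ^ 2)) := by
  refine (GaussianFourier.integrable_cexp_neg_mul_sq_norm_add (V := V) (b := (b : ℂ))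
    (by simpa using hb) 0 0).norm.congr (ae_of_all _ fun v => ?_)
  simp only [zero_mul, add_zero, Complex.norm_exp]
  norm_cast

theorem add_one_mul_exp_neg_mul_sq_le {a : ℝ} (ha : 0 < a) (r : ℝ) :
    (r + 1) * exp (-a * r ^ 2) ≤ (2 + 2 / a) * exp (-(a / 2) * r ^ 2) := by
  have hpoly : r + 1 ≤ (2 + 2 / a) * (a / 2 * r ^ 2 + 1) := by
    have : (2 + 2 / a) * (a / 2 * r ^ 2 + 1) = 2 + 2 / a + a * r ^ 2 + r ^ 2 := by
      field_simp; ring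
    rw [this]
    nlinarith [sq_nonneg (r - 1), div_pos two_pos ha, mul_nonneg ha.le (sq_nonneg r)]
  calc (r + 1) * exp (-a * r ^ 2)
      ≤ (2 + 2 / a) * exp (a / 2 * r ^ 2) * exp (-a * r ^ 2) := by
        gcongr
        exact hpoly.trans (by gcongr; linarith [add_one_le_exp (a / 2 * r ^ 2)])
    _ = (2 + 2 / a) * exp (-(a / 2) * r ^ 2) := by
        rw [mul_assoc, ← exp_add]; ring_nf

theorem integrable_norm_add_one_mul_exp_neg_mul_sq_norm {b : ℝ} (hb : 0 < b) :
    Integrable (fun v : V => (‖v‖ + 1) * exp (-b * ‖v‖ ^ 2)) := by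
  refine ((integrable_exp_neg_mul_sq_norm (half_pos hb)).const_mul (2 + 2 / b)).mono'
    (by fun_prop) (ae_of_all _ fun v => ?_)
  rw [Real.norm_eq_abs, abs_of_nonneg (by positivity)]
  exact add_one_mul_exp_neg_mul_sq_le hb ‖v‖

end Gaussian

theorem exp_neg_mul_sq_le_of_sub_one_le {b r ρ : ℝ} (hb : 0 ≤ b) (hr : 0 ≤ r) (hρ : 0 ≤ ρ)
    (hrρ : r - 1 ≤ ρ) : exp (-b * ρ ^ 2) ≤ exp b * exp (-(b / 2) * r ^ 2) := by
  rw [← exp_add, exp_le_exp]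
  have : r ^ 2 / 2 - 1 ≤ ρ ^ 2 := by
    rcases le_total r 1 with h | h
    · nlinarith
    · nlinarith [mul_le_mul hrρ hrρ (by linarith) hρ, sq_nonneg (r - 2)]
  nlinarith

noncomputable def heatKernelFDeriv (d : ℕ) (x : EuclideanSpace ℝ (Fin d)) (t : ℝ) :
    EuclideanSpace ℝ (Fin d) →L[ℝ] ℝ :=
  (-(heatKernel d x t / (2 * t))) • innerSL ℝ x

section HeatKernel

variable {d : ℕ} {t : ℝ}

local notation "ℝᵈ" => EuclideanSpace ℝ (Fin d)

theorem heatKernel_eq_mul_exp (x : ℝᵈ) (t : ℝ) :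
    heatKernel d x t = (4 * π * t) ^ (-(d : ℝ) / 2) * exp (-(4 * t)⁻¹ * ‖x‖ ^ 2) := by
  rw [heatKernel]
  congr 2
  ring

theorem heatKernel_nonneg (ht : 0 ≤ t) (x : ℝᵈ) : 0 ≤ heatKernel d x t := by
  rw [heatKernel]; positivity

theorem continuous_heatKernel (t : ℝ) : Continuous fun x : ℝᵈ => heatKernel d x t := by
  unfold heatKernel; fun_prop

theorem continuous_heatKernelFDeriv (t : ℝ) :
    Continuous fun x : ℝᵈ => heatKernelFDeriv d x t := by
  unfold heatKernelFDeriv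
  exact ((continuous_heatKernel t).div_const _).neg.smul (innerSL ℝ).continuous

theorem hasFDerivAt_heatKernel (x : ℝᵈ) (t : ℝ) :
    HasFDerivAt (heatKernel d · t) (heatKernelFDeriv d x t) x := by
  simp_rw [heatKernel_eq_mul_exp]
  refine ((((hasFDerivAt_id x).norm_sq.const_mul _).exp).const_mul _).congr_fderiv ?_
  ext v
  simp only [heatKernelFDeriv, heatKernel_eq_mul_exp, id_eq, ContinuousLinearMap.comp_id,
    neg_smul, smul_neg, neg_apply, smul_apply, coe_innerSL_apply, nsmul_eq_mul, Nat.cast_ofNat,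
    smul_eq_mul, neg_mul, neg_inj]
  ring

theorem norm_heatKernelFDeriv (ht : 0 < t) (x : ℝᵈ) :
    ‖heatKernelFDeriv d x t‖ = heatKernel d x t * ‖x‖ / (2 * t) := by
  rw [heatKernelFDeriv, norm_smul, innerSL_apply_norm, norm_neg, Real.norm_eq_abs,
    abs_of_nonneg (by have := heatKernel_nonneg ht.le x; positivity)]
  ring

theorem integrable_heatKernel (ht : 0 < t) : Integrable fun x : ℝᵈ => heatKernel d x t := by
  simp_rw [heatKernel_eq_mul_exp]
  exact (integrable_exp_neg_mul_sq_norm (by positivity)).const_mul _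

theorem integral_heatKernel (ht : 0 < t) : ∫ x : ℝᵈ, heatKernel d x t = 1 := by
  simp_rw [heatKernel_eq_mul_exp]
  rw [integral_const_mul, GaussianFourier.integral_rexp_neg_mul_sq_norm (by positivity),
    finrank_euclideanSpace_fin, div_inv_eq_mul, show π * (4 * t) = 4 * π * t by ring,
    ← rpow_add (by positivity), neg_div, neg_add_cancel, rpow_zero]

theorem heatKernel_sqrt_smul (ht : 0 < t) (z : ℝᵈ) :
    heatKernel d (√t • z) t = (√t ^ d)⁻¹ * heatKernel d z 1 := by
  have hscale : (4 * π * t) ^ (-(d : ℝ) / 2) = (√t ^ d)⁻¹ * (4 * π * 1) ^ (-(d : ℝ) / 2) := by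
    rw [mul_one, mul_rpow (by positivity) ht.le, sqrt_eq_rpow, ← rpow_natCast, ← rpow_mul ht.le,
      ← rpow_neg ht.le]
    ring_nf
  have hexp : -‖√t • z‖ ^ 2 / (4 * t) = -‖z‖ ^ 2 / (4 * 1) := by
    rw [norm_smul, norm_of_nonneg (sqrt_nonneg t), mul_pow, sq_sqrt ht.le]
    field_simp
  rw [heatKernel, heatKernel, hscale, hexp, mul_assoc]

theorem norm_heatKernelFDeriv_sqrt_smul (ht : 0 < t) (z : ℝᵈ) :
    ‖heatKernelFDeriv d (√t • z) t‖ = (√t ^ (d + 1))⁻¹ * ‖heatKernelFDeriv d z 1‖ := by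
  rw [norm_heatKernelFDeriv ht, norm_heatKernelFDeriv one_pos, heatKernel_sqrt_smul ht, norm_smul,
    norm_of_nonneg (sqrt_nonneg t)]
  have hsqrt : 0 < √t := sqrt_pos.2 ht
  field_simp
  rw [pow_succ]
  ring_nf
  rw [sq_sqrt ht.le]
  ring

theorem integral_norm_heatKernelFDeriv (ht : 0 < t) :
    ∫ z : ℝᵈ, ‖heatKernelFDeriv d z t‖ = (√t)⁻¹ * ∫ z : ℝᵈ, ‖heatKernelFDeriv d z 1‖ := by
  have hscale := Measure.integral_comp_smul volume (fun z : ℝᵈ => ‖heatKernelFDeriv d z t‖) √t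
  simp_rw [norm_heatKernelFDeriv_sqrt_smul ht, integral_const_mul,
    finrank_euclideanSpace_fin] at hscale
  have hsqrt : 0 < √t := sqrt_pos.2 ht
  rw [abs_of_pos (by positivity), smul_eq_mul, pow_succ] at hscale
  field_simp at hscale ⊢
  exact hscale.symm

theorem exists_integrable_heatKernelFDeriv_majorant (ht : 0 < t) :
    ∃ G : ℝᵈ → ℝ, Integrable G ∧ ∀ z₀ z : ℝᵈ, ‖z - z₀‖ < 1 → ‖heatKernelFDeriv d z t‖ ≤ G z₀ := by
  set b := (4 * t)⁻¹
  set c := (4 * π * t) ^ (-(d : ℝ) / 2) / (2 * t)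
  have hform : ∀ z : ℝᵈ, ‖heatKernelFDeriv d z t‖ = c * (‖z‖ * exp (-b * ‖z‖ ^ 2)) := fun z => by
    rw [norm_heatKernelFDeriv ht, heatKernel_eq_mul_exp]; ring
  refine ⟨fun z₀ => c * exp b * ((‖z₀‖ + 1) * exp (-(b / 2) * ‖z₀‖ ^ 2)),
    (integrable_norm_add_one_mul_exp_neg_mul_sq_norm (by positivity)).const_mul _,
    fun z₀ z hz => ?_⟩
  have hupper : ‖z‖ ≤ ‖z₀‖ + 1 := by linarith [norm_sub_norm_le z z₀]
  have hlower : ‖z₀‖ - 1 ≤ ‖z‖ := by linarith [norm_sub_norm_le z₀ z, norm_sub_rev z₀ z]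
  calc ‖heatKernelFDeriv d z t‖
      ≤ c * ((‖z₀‖ + 1) * (exp b * exp (-(b / 2) * ‖z₀‖ ^ 2))) := by
        rw [hform]
        gcongr
        exact exp_neg_mul_sq_le_of_sub_one_le (by positivity) (norm_nonneg _) (norm_nonneg _) hlower
    _ = c * exp b * ((‖z₀‖ + 1) * exp (-(b / 2) * ‖z₀‖ ^ 2)) := by ring

theorem integrable_heatKernelFDeriv (ht : 0 < t) :
    Integrable fun z : ℝᵈ => heatKernelFDeriv d z t := by
  obtain ⟨G, hG, hbound⟩ := exists_integrable_heatKernelFDeriv_majorant (d := d) ht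
  exact hG.mono' (continuous_heatKernelFDeriv t).aestronglyMeasurable
    (ae_of_all _ fun z => hbound z z (by simp))

end HeatKernel

theorem integrableOn_inv_sqrt_Ioc {T : ℝ} (hT : 0 ≤ T) :
    IntegrableOn (fun s : ℝ => (√s)⁻¹) (Ioc 0 T) := by
  have h := intervalIntegral.intervalIntegrable_rpow' (a := 0) (b := T) (r := -(1 / 2))
    (by norm_num)
  rw [intervalIntegrable_iff_integrableOn_Ioc_of_le hT] at h
  exact h.congr_fun (fun s hs => by simp only [sqrt_eq_rpow, rpow_neg hs.1.le]) measurableSet_Ioc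

theorem integral_inv_sqrt_Ioc {T : ℝ} (hT : 0 ≤ T) : ∫ s in Ioc 0 T, (√s)⁻¹ = 2 * √T := by
  rw [setIntegral_congr_fun measurableSet_Ioc
      (g := fun s => s ^ (-(1 / 2) : ℝ)) fun s hs => by simp only [sqrt_eq_rpow, rpow_neg hs.1.le],
    ← intervalIntegral.integral_of_le hT, integral_rpow (Or.inl (by norm_num)),
    zero_rpow (by norm_num), sqrt_eq_rpow]
  rw [show -(1 / 2) + 1 = (1 / 2 : ℝ) by norm_num]
  ring

section TimeSlice

variable {d : ℕ} {s K : ℝ} {g : EuclideanSpace ℝ (Fin d) → ℝ}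

local notation "ℝᵈ" => EuclideanSpace ℝ (Fin d)

theorem norm_integral_heatKernel_mul_le (hs : 0 < s) (hgK : ∀ y, |g y| ≤ K) (x : ℝᵈ) :
    ‖∫ y, heatKernel d (x - y) s * g y‖ ≤ K := by
  have h := norm_integral_smul_comp_sub_le (μ := volume) (integrable_heatKernel (d := d) hs) hgK x
  simp_rw [smul_eq_mul, mul_comm (g _), Real.norm_of_nonneg (heatKernel_nonneg hs.le _),
    integral_heatKernel hs, mul_one] at h
  exact h

theorem norm_integral_smul_heatKernelFDeriv_le (hs : 0 < s) (hgK : ∀ y, |g y| ≤ K) (x : ℝᵈ) :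
    ‖∫ y, g y • heatKernelFDeriv d (x - y) s‖ ≤
      K * ((∫ z : ℝᵈ, ‖heatKernelFDeriv d z 1‖) * (√s)⁻¹) := by
  have h := norm_integral_smul_comp_sub_le (μ := volume) (integrable_heatKernelFDeriv hs) hgK x
  rwa [integral_norm_heatKernelFDeriv hs, mul_comm (√s)⁻¹] at h

theorem hasFDerivAt_integral_heatKernel_mul (hs : 0 < s) (hg : AEStronglyMeasurable g)
    (hgK : ∀ y, |g y| ≤ K) (x : ℝᵈ) :
    HasFDerivAt (fun x => ∫ y, heatKernel d (x - y) s * g y)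
      (∫ y, g y • heatKernelFDeriv d (x - y) s) x := by
  obtain ⟨G, hG, hbound⟩ := exists_integrable_heatKernelFDeriv_majorant (d := d) hs
  exact hasFDerivAt_integral_comp_sub_mul (fun z => hasFDerivAt_heatKernel z s)
    (continuous_heatKernelFDeriv s) (integrable_heatKernel hs) hg hgK hG hbound x

theorem continuous_integral_smul_heatKernelFDeriv (hs : 0 < s) (hg : AEStronglyMeasurable g)
    (hgK : ∀ y, |g y| ≤ K) :
    Continuous fun x => ∫ y, g y • heatKernelFDeriv d (x - y) s := by
  obtain ⟨G, hG, hbound⟩ := exists_integrable_heatKernelFDeriv_majorant (d := d) hs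
  exact continuous_integral_smul_comp_sub (continuous_heatKernelFDeriv s) hg hgK hG hbound

end TimeSlice

section Measurability

variable {d : ℕ} {h : ℝ → EuclideanSpace ℝ (Fin d) → ℝ}

local notation "ℝᵈ" => EuclideanSpace ℝ (Fin d)

theorem measurable_heatKernel_uncurry (x : ℝᵈ) :
    Measurable fun p : ℝ × ℝᵈ => heatKernel d (x - p.2) p.1 := by
  unfold heatKernel; fun_prop

theorem stronglyMeasurable_integral_heatKernel_mul (hh : Measurable (Function.uncurry h))
    (x : ℝᵈ) : StronglyMeasurable fun s => ∫ y, heatKernel d (x - y) s * h s y :=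
  ((measurable_heatKernel_uncurry x).mul hh).stronglyMeasurable.integral_prod_right

theorem stronglyMeasurable_integral_smul_heatKernelFDeriv (hh : Measurable (Function.uncurry h))
    (x : ℝᵈ) : StronglyMeasurable fun s => ∫ y, h s y • heatKernelFDeriv d (x - y) s := by
  unfold heatKernelFDeriv
  refine StronglyMeasurable.integral_prod_right' (ν := volume) (f := fun p : ℝ × ℝᵈ => h p.1 p.2 •
    (-(heatKernel d (x - p.2) p.1 / (2 * p.1))) • innerSL ℝ (x - p.2)) ?_
  exact hh.stronglyMeasurable.smul
    (((measurable_heatKernel_uncurry x).div (by fun_prop)).neg.stronglyMeasurable.smul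
      (by fun_prop : Continuous fun p : ℝ × ℝᵈ => innerSL ℝ (x - p.2)).stronglyMeasurable)

end Measurability

/-- There is a constant `C > 0`, depending only on `d`, such that for every bounded source
`h` with `|h| ≤ K`, the Duhamel potential `ψ(x) = ∫₀ᵀ ∫ Γ(x-y,s) h(s,y) dy ds` is `C¹` with
`‖Dψ(x)‖ ≤ C K T^{1/2}`. -/
theorem duhamel_first_derivative_bound (d : ℕ) :
    ∃ C > (0 : ℝ), ∀ (K T : ℝ) (h : ℝ → EuclideanSpace ℝ (Fin d) → ℝ),
      0 ≤ K → 0 < T →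
      Measurable (Function.uncurry h) →
      (∀ s ∈ Set.Icc (0 : ℝ) T, ∀ x, |h s x| ≤ K) →
      ContDiff ℝ 1 (fun x : EuclideanSpace ℝ (Fin d) =>
          ∫ s in Set.Ioc (0 : ℝ) T, ∫ y, heatKernel d (x - y) s * h s y) ∧
      ∀ x : EuclideanSpace ℝ (Fin d),
        ‖fderiv ℝ (fun x : EuclideanSpace ℝ (Fin d) =>
            ∫ s in Set.Ioc (0 : ℝ) T, ∫ y, heatKernel d (x - y) s * h s y) x‖
          ≤ C * K * T ^ ((1 : ℝ) / 2) := by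
  set M := ∫ z : EuclideanSpace ℝ (Fin d), ‖heatKernelFDeriv d z 1‖
  refine ⟨2 * M + 1, by positivity, fun K T h hK hT hh hbound => ?_⟩
  have hslice : ∀ s ∈ Ioc 0 T, ∀ y, |h s y| ≤ K := fun s hs => hbound s (Ioc_subset_Icc_self hs)
  have hmeas : ∀ s, AEStronglyMeasurable (h s) :=
    fun s => (hh.comp measurable_prodMk_left).aestronglyMeasurable
  have hIoc {P : ℝ → Prop} (hP : ∀ s ∈ Ioc 0 T, P s) : ∀ᵐ s ∂volume.restrict (Ioc 0 T), P s :=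
    (ae_restrict_iff' measurableSet_Ioc).2 (ae_of_all _ hP)
  obtain ⟨hC1, hDψ⟩ := contDiff_one_integral_and_norm_fderiv_le
    (F' := fun x s => ∫ y, h s y • heatKernelFDeriv d (x - y) s)
    (fun x => (stronglyMeasurable_integral_heatKernel_mul hh x).aestronglyMeasurable)
    (fun x => (integrable_const K).mono'
      (stronglyMeasurable_integral_heatKernel_mul hh x).aestronglyMeasurable
      (hIoc fun s hs => norm_integral_heatKernel_mul_le hs.1 (hslice s hs) x))
    (fun x => (stronglyMeasurable_integral_smul_heatKernelFDeriv hh x).aestronglyMeasurable)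
    (((integrableOn_inv_sqrt_Ioc hT.le).const_mul M).const_mul K)
    (hIoc fun s hs x => norm_integral_smul_heatKernelFDeriv_le hs.1 (hslice s hs) x)
    (hIoc fun s hs x => hasFDerivAt_integral_heatKernel_mul hs.1 (hmeas s) (hslice s hs) x)
    (hIoc fun s hs => continuous_integral_smul_heatKernelFDeriv hs.1 (hmeas s) (hslice s hs))
  refine ⟨hC1, fun x => (hDψ x).trans ?_⟩
  rw [integral_const_mul, integral_const_mul, integral_inv_sqrt_Ioc hT.le, ← sqrt_eq_rpow]
  nlinarith [mul_nonneg hK (sqrt_nonneg T)]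
end
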